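/- Let A be an infinite set and B a nontrivial abelian group. Then for every n ≥ 2 there exists a function f : A^n → B determined by oddsupp that is not decomposable, i.e., not (n − 1)-decomposable. -/
import Mathlib


open Finset

section Defs

variable {A B : Type*}

/-- The `i`-th variable is essential in `f`. -/
def essentialAt {n : ℕ} (f : (Fin n → A) → B) (i : Fin n) : Prop :=
  ∃ x x' : Fin n → A, (∀ k, k ≠ i → x k = x' k) ∧ f x ≠ f x'

/-- The essential arity of `f`: the number of its essential variables. -/
noncomputable def essArity {n : ℕ} (f : (Fin n → A) → B) : ℕ :=
  Nat.card {i : Fin n // essentialAt f i}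

/-- The identification minor `f_{i ← j}`. -/
def idMinor {n : ℕ} (f : (Fin n → A) → B) (i j : Fin n) : (Fin n → A) → B :=
  fun x => f (Function.update x i (x j))

/-- The arity gap of `f`. -/
noncomputable def arityGap {n : ℕ} (f : (Fin n → A) → B) : ℕ :=
  sInf {d : ℕ | ∃ i j : Fin n, i ≠ j ∧ essentialAt f i ∧ essentialAt f j ∧
    d = essArity f - essArity (idMinor f i j)}

/-- `oddsupp x` is the set of elements occurring an odd number of times in `x`. -/
def oddsupp {n : ℕ} [DecidableEq A] (x : Fin n → A) : Finset A :=
  (Finset.univ.image x).filter fun a => Odd ((Finset.univ.filter fun j => x j = a).card)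

/-- `f` is determined by `oddsupp`. -/
def DeterminedByOddsupp {n : ℕ} [DecidableEq A] (f : (Fin n → A) → B) : Prop :=
  ∃ φ : Finset A → B, ∀ x, f x = φ (oddsupp x)

/-- `oddsuppOn I x = oddsupp (x|_I)`. -/
def oddsuppOn {n : ℕ} [DecidableEq A] (I : Finset (Fin n)) (x : Fin n → A) : Finset A :=
  (I.image x).filter fun a => Odd ((I.filter fun j => x j = a).card)

/-- `f` is `k`-decomposable: a sum of functions with at most `k` essential variables. -/
def KDecomposable {n : ℕ} [AddCommMonoid B] (k : ℕ) (f : (Fin n → A) → B) : Prop :=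
  ∃ (s : ℕ) (g : Fin s → (Fin n → A) → B),
    (∀ i, essArity (g i) ≤ k) ∧ ∀ x, f x = ∑ i, g i x

/-- Partial derivative of `f` with respect to its `i`-th variable with parameter `a`. -/
def pDeriv {n : ℕ} [AddCommGroup B] (f : (Fin n → A) → B) (i : Fin n) (a : A) :
    (Fin n → A) → B :=
  fun x => f (Function.update x i a) - f x

/-- Higher-order partial derivative `Δ_I^a f`. -/
def pDerivFin {n : ℕ} [AddCommGroup B] (f : (Fin n → A) → B) (I : Finset (Fin n))
    (a : Fin n → A) : (Fin n → A) → B :=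
  (I.sort (· ≤ ·)).foldr (fun i g => pDeriv g i (a i)) f

/-- `updateOn x J a` is the tuple `x_J^a`. -/
def updateOn {n : ℕ} (x : Fin n → A) (J : Finset (Fin n)) (a : Fin n → A) : Fin n → A :=
  fun k => if k ∈ J then a k else x k

/-- `g` is a simple minor of `f`. -/
def IsSimpleMinor {n m : ℕ} (g : (Fin m → A) → B) (f : (Fin n → A) → B) : Prop :=
  ∃ σ : Fin n → Fin m, ∀ x : Fin m → A, g x = f (x ∘ σ)

/-- `f` and `g` are equivalent: each is a simple minor of the other. -/
def FnEquiv {n m : ℕ} (f : (Fin n → A) → B) (g : (Fin m → A) → B) : Prop :=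
  IsSimpleMinor g f ∧ IsSimpleMinor f g

end Defs

section Aux

variable {A B : Type*}

lemma notEssential_invariant {n : ℕ} {h : (Fin n → A) → B} {i : Fin n}
    (hne : ¬ essentialAt h i) (x : Fin n → A) (a : A) :
    h (Function.update x i a) = h x := by
  by_contra hc
  exact hne ⟨Function.update x i a, x, fun k hk => Function.update_of_ne hk _ _, hc⟩

lemma updateOn_insert {n : ℕ} (x y : Fin n → A) (i : Fin n) (S : Finset (Fin n)) :
    updateOn x (insert i S) y = Function.update (updateOn x S y) i (y i) := by
  funext k
  by_cases hk : k = i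
  · subst hk; simp [updateOn]
  · simp [updateOn, Function.update_of_ne hk, hk]

lemma exists_not_essential {n : ℕ} {g : (Fin n → A) → B} (hg : essArity g ≤ n - 1)
    (hn : 1 ≤ n) : ∃ i, ¬ essentialAt g i := by
  by_contra hc
  push_neg at hc
  have hcard : essArity g = n := by
    unfold essArity
    rw [Nat.card_congr (Equiv.subtypeUnivEquiv hc)]
    simp
  omega

lemma D_eq_zero [AddCommGroup B] {n : ℕ} (h : (Fin n → A) → B)
    {i : Fin n} (hne : ¬ essentialAt h i) (x y : Fin n → A) :
    ∑ S ∈ (Finset.univ : Finset (Fin n)).powerset,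
      ((-1 : ℤ) ^ S.card) • h (updateOn x S y) = 0 := by
  have hins : (Finset.univ : Finset (Fin n)) = insert i (Finset.univ.erase i) :=
    (Finset.insert_erase (Finset.mem_univ i)).symm
  rw [hins, Finset.sum_powerset_insert (Finset.notMem_erase i _)]
  have hterm : ∀ S ∈ (Finset.univ.erase i).powerset,
      ((-1 : ℤ) ^ (insert i S).card) • h (updateOn x (insert i S) y)
        = -(((-1 : ℤ) ^ S.card) • h (updateOn x S y)) := by
    intro S hS
    have hiS : i ∉ S := fun hi => (Finset.notMem_erase i _) (Finset.mem_powerset.1 hS hi)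
    rw [Finset.card_insert_of_notMem hiS, updateOn_insert, notEssential_invariant hne,
      pow_succ, mul_smul]
    simp
  rw [Finset.sum_congr rfl hterm]
  simp

lemma oddsupp_of_injective {n : ℕ} [DecidableEq A] {z : Fin n → A}
    (hz : Function.Injective z) : oddsupp z = Finset.univ.image z := by
  unfold oddsupp
  apply Finset.filter_true_of_mem
  intro a ha
  obtain ⟨j, _, rfl⟩ := Finset.mem_image.1 ha
  have hfil : (Finset.univ.filter fun k => z k = z j) = {j} := by
    ext k
    simp only [Finset.mem_filter, Finset.mem_univ, true_and, Finset.mem_singleton]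
    exact ⟨fun h => hz h, fun h => by rw [h]⟩
  rw [hfil]
  simp

end Aux

theorem exists_not_decomposable_of_infinite {A B : Type*} [Infinite A] [DecidableEq A]
    [AddCommGroup B] [Nontrivial B] :
    ∀ n : ℕ, 2 ≤ n → ∃ f : (Fin n → A) → B, DeterminedByOddsupp f ∧
      ¬ KDecomposable (n - 1) f := by
  intro n hn
  obtain ⟨b, hb⟩ := exists_ne (0 : B)
  set e := Infinite.natEmbedding A with he
  set X : Fin n → A := fun j => e (j : ℕ) with hX
  set Y : Fin n → A := fun j => e (n + (j : ℕ)) with hY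
  set T₀ : Finset A := Finset.univ.image Y with hT₀
  refine ⟨fun x => if oddsupp x = T₀ then b else 0,
    ⟨fun T => if T = T₀ then b else 0, fun x => rfl⟩, ?_⟩
  rintro ⟨s, g, hga, hsum⟩
  -- every updated tuple is injective
  have hzinj : ∀ S : Finset (Fin n), Function.Injective (updateOn X S Y) := by
    intro S j k hjk
    have hjlt := j.isLt
    have hklt := k.isLt
    simp only [updateOn, hX, hY] at hjk
    split_ifs at hjk <;>
      · have := e.injective hjk; exact Fin.ext (by omega)
  have hYinj : Function.Injective Y := by
    intro j k hjk
    have := e.injective hjk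
    exact Fin.ext (by omega)
  -- value of f at each updated tuple
  have hval : ∀ S : Finset (Fin n),
      (if oddsupp (updateOn X S Y) = T₀ then b else 0)
        = if S = Finset.univ then b else 0 := by
    intro S
    by_cases hS : S = Finset.univ
    · subst hS
      have hz : updateOn X Finset.univ Y = Y := by funext k; simp [updateOn]
      rw [hz, oddsupp_of_injective hYinj]
      simp [hT₀]
    · rw [if_neg hS, if_neg ?_]
      obtain ⟨j, hj⟩ : ∃ j, j ∉ S := by
        by_contra hcon
        push_neg at hcon
        exact hS (Finset.eq_univ_iff_forall.2 hcon)
      intro heq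
      have hXjin : X j ∈ oddsupp (updateOn X S Y) := by
        rw [oddsupp_of_injective (hzinj S)]
        exact Finset.mem_image.2 ⟨j, Finset.mem_univ j, by simp [updateOn, hj]⟩
      rw [heq, hT₀] at hXjin
      obtain ⟨k, _, hk⟩ := Finset.mem_image.1 hXjin
      have := e.injective hk
      have hjlt := j.isLt
      omega
  -- the alternating sum of f is (-1)^n • b
  have hD : ∑ S ∈ (Finset.univ : Finset (Fin n)).powerset,
      ((-1 : ℤ) ^ S.card) • (if oddsupp (updateOn X S Y) = T₀ then b else 0)
        = ((-1 : ℤ) ^ n) • b := by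
    rw [Finset.sum_eq_single_of_mem Finset.univ (Finset.mem_powerset_self _)]
    · rw [hval]
      simp [Finset.card_univ]
    · intro S _ hS
      rw [hval S, if_neg hS, smul_zero]
  -- the alternating sum vanishes by the decomposition
  have hD0 : ∑ S ∈ (Finset.univ : Finset (Fin n)).powerset,
      ((-1 : ℤ) ^ S.card) • (if oddsupp (updateOn X S Y) = T₀ then b else 0) = 0 := by
    have hrw : ∀ S : Finset (Fin n),
        ((-1 : ℤ) ^ S.card) • (if oddsupp (updateOn X S Y) = T₀ then b else 0)
          = ∑ i, ((-1 : ℤ) ^ S.card) • g i (updateOn X S Y) := by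
      intro S
      rw [show (if oddsupp (updateOn X S Y) = T₀ then b else 0)
            = ∑ i, g i (updateOn X S Y) from hsum _, Finset.smul_sum]
    rw [Finset.sum_congr rfl fun S _ => hrw S, Finset.sum_comm]
    apply Finset.sum_eq_zero
    intro i _
    obtain ⟨j, hj⟩ := exists_not_essential (hga i) (by omega)
    exact D_eq_zero (g i) hj X Y
  rw [hD0] at hD
  -- conclude b = 0, contradiction
  have hb0 : b = 0 := by
    have h1 : ((-1 : ℤ) ^ n * (-1 : ℤ) ^ n) • b = 0 := by
      rw [mul_smul, ← hD, smul_zero]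
    rwa [← pow_add, Even.neg_one_pow ⟨n, rfl⟩, one_smul] at h1
  exact hb hb0
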